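/- arXiv:2407.02629 — 2 statements merged into one kernel-verified Lean document; each statement's English description precedes it below -/
import Mathlib

section
/- Let (S,*) be a commutative adequate partial semigroup, let r be an idempotent in J(S), and let (C_n)_{n=1}^∞ be a sequence of members of r. Then there exist functions γ : P_f(ℱ) → S and H : P_f(ℱ) → P_f(ℕ) such that: (1) if F, G ∈ P_f(ℱ) with G ⊊ F, then max H(G) < min H(F); and (2) whenever n ∈ ℕ, G_1 ⊊ G_2 ⊊ ... ⊊ G_n are members of P_f(ℱ) with |G_1| = m, and f_i ∈ G_i for each i, then ∏_{i=1}^{n} (γ(G_i)*∏_{t∈H(G_i)} f_i(t)) ∈ C_m. -/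
/-- A partial semigroup: `mul` is partially defined (`none` = undefined), and
associativity holds in the strong sense: either side is defined iff the other is,
and then they agree. -/
structure PartialSemigroup (S : Type*) where
  mul : S → S → Option S
  assoc : ∀ a b c : S,
    (mul a b).bind (fun x => mul x c) = (mul b c).bind (fun y => mul a y)

namespace PartialSemigroup

variable {S : Type*} (P : PartialSemigroup S)

/-- φ(a) = {t : a*t is defined}. -/
def phi (a : S) : Set S := {t | (P.mul a t).isSome}

/-- σ(H) = ⋂_{s ∈ H} φ(s). -/
def sigma (H : Set S) : Set S := ⋂ s ∈ H, P.phi s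

/-- a⁻¹A = {t ∈ φ(a) : a*t ∈ A}. -/
def invImg (a : S) (A : Set S) : Set S :=
  {t | ∃ v, P.mul a t = some v ∧ v ∈ A}

/-- An adequate partial semigroup: σ(H) ≠ ∅ for every finite nonempty H. -/
def Adequate : Prop :=
  ∀ H : Finset S, H.Nonempty → (P.sigma ↑H).Nonempty

/-- δS: ultrafilters containing every φ(x). -/
def mem_delta (q : Ultrafilter S) : Prop := ∀ x : S, P.phi x ∈ q

/-- Product of a nonempty list, associated to the left; `none` if empty or undefined. -/
def listProd : List S → Option S
  | [] => none
  | a :: l => l.foldl (fun acc b => acc.bind (fun x => P.mul x b)) (some a)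

/-- ∏_{t ∈ H} f(t) in increasing order of indices. -/
def finProd (f : ℕ → S) (H : Finset ℕ) : Option S :=
  P.listProd ((H.sort (· ≤ ·)).map f)

/-- Product of a list of partially defined elements. -/
def optProd : List (Option S) → Option S
  | [] => none
  | o :: l => l.foldl (fun acc b => acc.bind (fun x => b.bind (fun y => P.mul x y))) o

/-- An adequate sequence. -/
def AdequateSeq (f : ℕ → S) : Prop :=
  (∀ H : Finset ℕ, H.Nonempty → (P.finProd f H).isSome) ∧
  (∀ F : Finset S, F.Nonempty → ∃ m : ℕ,
    ∀ H : Finset ℕ, H.Nonempty → (∀ n ∈ H, m ≤ n) →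
      ∀ v, P.finProd f H = some v → v ∈ P.sigma ↑F)

/-- The interleaved product (∏_{i=1}^m a(i)*f(t(i)))*a(m+1). -/
def jProd {m : ℕ} (a : Fin (m + 1) → S) (t : Fin m → ℕ) (f : ℕ → S) : Option S :=
  P.listProd
    ((((List.finRange m).map (fun i => [a i.castSucc, f (t i)])).flatten) ++ [a (Fin.last m)])

/-- J-sets. -/
def IsJSet (A : Set S) : Prop :=
  ∀ F : Finset (ℕ → S), F.Nonempty → (∀ f ∈ F, P.AdequateSeq f) →
    ∀ L : Finset S, L.Nonempty →
      ∃ m : ℕ, 0 < m ∧ ∃ a : Fin (m + 1) → S, ∃ t : Fin m → ℕ, StrictMono t ∧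
        ∀ f ∈ F, ∃ v, P.jProd a t f = some v ∧ v ∈ A ∩ P.sigma ↑L

end PartialSemigroup

namespace PartialSemigroup
variable {S : Type*} (P : PartialSemigroup S)

/-- A syndetic subset of a partial semigroup. -/
def Syndetic (A : Set S) : Prop :=
  ∃ H : Finset S, H.Nonempty ∧ P.sigma ↑H ⊆ ⋃ t ∈ H, P.invImg t A

end PartialSemigroup

namespace PartialSemigroup
variable {S : Type*} (P : PartialSemigroup S)

/-- `I` is a (two-sided) ideal of `δS` (with respect to the operation `star`). -/
def IsIdeal (star : {q : Ultrafilter S // P.mem_delta q} → {q : Ultrafilter S // P.mem_delta q} →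
      {q : Ultrafilter S // P.mem_delta q})
    (I : Set {q : Ultrafilter S // P.mem_delta q}) : Prop :=
  I.Nonempty ∧ ∀ p ∈ I, ∀ q, star p q ∈ I ∧ star q p ∈ I

/-- `K` is the smallest (two-sided) ideal of `δS`. -/
def IsSmallestIdeal (star : {q : Ultrafilter S // P.mem_delta q} →
      {q : Ultrafilter S // P.mem_delta q} → {q : Ultrafilter S // P.mem_delta q})
    (K : Set {q : Ultrafilter S // P.mem_delta q}) : Prop :=
  P.IsIdeal star K ∧ ∀ I, P.IsIdeal star I → K ⊆ I

end PartialSemigroup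


/-!
Adjoining a zero (standing for "undefined") and then a unit turns the commutative partial
semigroup into a commutative monoid, where the partial products of the statement become
ordinary finite products. The pair `(γ(F), H(F))` is then chosen by well-founded recursion
on `P_f(ℱ)` ordered by inclusion. Replacing each `C_m` by `C_m⋆ = {a ∈ C_m | a⁻¹C_m ∈ r}`,
the finitely many products `v` of chains strictly below `F` lie in `C_{|G₁|}⋆`, so
`D = C_{|F|}⋆ ∩ ⋂ v⁻¹C_{|G₁|}⋆` belongs to `r` and is a J-set. The J-set property for the
sequences of `F`, shifted beyond every `H(G)` with `G ⊊ F`, yields `H(F)`; by commutativity the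
elements `a(i)` it produces collect into the single factor `γ(F)`.
-/

theorem WellFoundedLT.exists_forall_spec {X Y : Type*} [Preorder X] [WellFoundedLT X]
    [Nonempty Y] (Spec : (X → Y) → X → Y → Prop)
    (spec_congr : ∀ Ψ Ψ' x y, (∀ x' < x, Ψ x' = Ψ' x') → Spec Ψ x y → Spec Ψ' x y)
    (exists_spec : ∀ Ψ x, (∀ x' < x, Spec Ψ x' (Ψ x')) → ∃ y, Spec Ψ x y) :
    ∃ Ψ : X → Y, ∀ x, Spec Ψ x (Ψ x) := by
  classical
  let below (x : X) (Ψ : ∀ x' < x, Y) : X → Y :=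
    fun x' => if h : x' < x then Ψ x' h else Classical.arbitrary Y
  let Ψ : X → Y := wellFounded_lt.fix fun x rec => Classical.epsilon (Spec (below x rec) x)
  have hΨ (x : X) : Ψ x = Classical.epsilon (Spec (below x fun x' _ => Ψ x') x) :=
    wellFounded_lt.fix_eq _ x
  refine ⟨Ψ, fun x => ?_⟩
  induction x using WellFoundedLT.induction with
  | _ x ih =>
    have hbelow : ∀ x' < x, below x (fun x' _ => Ψ x') x' = Ψ x' := fun x' h => dif_pos h
    have hspec : Spec (below x fun x' _ => Ψ x') x (Ψ x) := by
      rw [hΨ x]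
      refine Classical.epsilon_spec (exists_spec _ x fun x' hx' => ?_)
      rw [hbelow x' hx']
      exact spec_congr Ψ _ x' _ (fun x'' h => (hbelow x'' (h.trans hx')).symm) (ih x' hx')
    exact spec_congr _ Ψ x _ hbelow hspec

namespace PartialSemigroup

section Total

variable {S : Type*} (P : PartialSemigroup S)

/-- `Option S`, with `none` read as an undefined product: `P.mul` extends to a total
multiplication on it, for which `none` is a zero. -/
def Total (_P : PartialSemigroup S) : Type _ := Option S

instance : Semigroup P.Total where
  mul x y := Option.bind x fun a => Option.bind y (P.mul a)
  mul_assoc x y z := by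
    cases x with
    | none => rfl
    | some a =>
      cases y with
      | none => rfl
      | some b =>
        cases z with
        | none => show (P.mul a b).bind (fun _ => none) = none; simp
        | some c => exact P.assoc a b c

instance [Fact (∀ a b : S, P.mul a b = P.mul b a)] : CommSemigroup P.Total where
  mul_comm x y := by
    rcases x with _ | a <;> rcases y with _ | b
    all_goals try rfl
    exact Fact.out (p := ∀ a b : S, P.mul a b = P.mul b a) a b

def lift (x : Option S) : WithOne P.Total := WithOne.coe (α := P.Total) x

def of (s : S) : WithOne P.Total := P.lift (some s)

variable {P}

lemma of_mul_of (a b : S) : P.of a * P.of b = P.lift (P.mul a b) := rfl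

lemma lift_injective : Function.Injective P.lift := WithOne.coe_injective

lemma of_injective : Function.Injective P.of :=
  fun _ _ h => Option.some_injective _ (lift_injective h)

lemma lift_none_mul (z : WithOne P.Total) : P.lift none * z = P.lift none := by
  rcases z with _ | z <;> rfl

lemma exists_eq_some_of_lift_mul_eq_of {x : Option S} {z : WithOne P.Total} {w : S}
    (h : P.lift x * z = P.of w) : ∃ g, x = some g := by
  cases x with
  | none => exact absurd (lift_injective ((lift_none_mul z).symm.trans h)) nofun
  | some g => exact ⟨g, rfl⟩

lemma lift_foldl (l : List (Option S)) (x : Option S) :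
    P.lift (l.foldl (fun acc b => acc.bind fun x => b.bind fun y => P.mul x y) x) =
      P.lift x * (l.map P.lift).prod := by
  induction l generalizing x with
  | nil => simp
  | cons b l ih => rw [List.foldl_cons, ih, List.map_cons, List.prod_cons, ← mul_assoc]; rfl

lemma lift_listProd {l : List S} (hl : l ≠ []) : P.lift (P.listProd l) = (l.map P.of).prod := by
  obtain ⟨a, l, rfl⟩ := List.exists_cons_of_ne_nil hl
  have h := lift_foldl (P := P) (l.map some) (some a)
  simp only [List.foldl_map, Option.bind_some, List.map_map] at h
  rw [listProd, h, List.map_cons, List.prod_cons]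
  rfl

lemma lift_optProd {l : List (Option S)} (hl : l ≠ []) :
    P.lift (P.optProd l) = (l.map P.lift).prod := by
  obtain ⟨o, l, rfl⟩ := List.exists_cons_of_ne_nil hl
  exact lift_foldl l o

variable [Fact (∀ a b : S, P.mul a b = P.mul b a)]

lemma lift_finProd (f : ℕ → S) {H : Finset ℕ} (hH : H.Nonempty) :
    P.lift (P.finProd f H) = ∏ t ∈ H, P.of (f t) := by
  rw [finProd, lift_listProd (by
    rw [Ne, List.map_eq_nil_iff, ← List.length_eq_zero_iff, Finset.length_sort]
    exact hH.card_pos.ne'), List.map_map,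
    ((H.sort_perm_toList _).map _).prod_eq, Finset.prod_map_toList]
  rfl

lemma lift_jProd {m : ℕ} (a : Fin (m + 1) → S) (t : Fin m → ℕ) (f : ℕ → S) :
    P.lift (P.jProd a t f) = P.lift (P.listProd (List.ofFn a)) * ∏ i, P.of (f (t i)) := by
  rw [jProd, lift_listProd (by simp), lift_listProd (by simp)]
  simp only [List.map_append, List.prod_append, List.map_flatten, List.map_map,
    List.prod_flatten, List.map_ofFn, List.prod_ofFn, Function.comp_def, List.map_cons,
    List.map_nil, List.prod_cons, List.prod_nil, mul_one, ← Fin.prod_univ_def,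
    Finset.prod_mul_distrib, Fin.prod_univ_castSucc (n := m)]
  exact mul_right_comm _ _ _

end Total

section JSet

variable {S : Type*} {P : PartialSemigroup S}

lemma finProd_comp_add_right (f : ℕ → S) (N : ℕ) (H : Finset ℕ) :
    P.finProd (fun n => f (n + N)) H = P.finProd f (H.map (addRightEmbedding N)) := by
  rw [finProd, finProd, ← Finset.map_sort (addRightEmbedding N) H (· ≤ ·) (· ≤ ·)
    fun a _ b _ => by simp, List.map_map]
  rfl

lemma AdequateSeq.comp_add_right {f : ℕ → S} (hf : P.AdequateSeq f) (N : ℕ) :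
    P.AdequateSeq (fun n => f (n + N)) := by
  refine ⟨fun H hH => ?_, fun F hF => ?_⟩
  · rw [finProd_comp_add_right]
    exact hf.1 _ (Finset.map_nonempty.2 hH)
  · obtain ⟨m, hm⟩ := hf.2 F hF
    refine ⟨m, fun H hH hHm v hv =>
      hm (H.map (addRightEmbedding N)) (Finset.map_nonempty.2 hH) (fun n hn => ?_) v ?_⟩
    · obtain ⟨k, hk, rfl⟩ := Finset.mem_map.1 hn
      exact (hHm k hk).trans (Nat.le_add_right _ _)
    · rwa [← finProd_comp_add_right]

lemma IsJSet.exists_mul_prod_mem [Fact (∀ a b : S, P.mul a b = P.mul b a)] {E : Set S}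
    (hE : P.IsJSet E) {F : Finset (ℕ → S)} (hF : F.Nonempty) (hFa : ∀ f ∈ F, P.AdequateSeq f)
    (N : ℕ) :
    ∃ (g : S) (K : Finset ℕ), K.Nonempty ∧ (∀ j ∈ K, N ≤ j) ∧
      ∀ f ∈ F, ∃ w, P.of g * ∏ t ∈ K, P.of (f t) = P.of w ∧ w ∈ E := by
  classical
  obtain ⟨f₀, hf₀⟩ := hF
  obtain ⟨m, hm, a, t, ht, hprod⟩ := hE (F.image fun f n => f (n + N))
    ⟨_, Finset.mem_image_of_mem _ hf₀⟩ (by simpa using fun f hf => (hFa f hf).comp_add_right N)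
    {f₀ 0} (Finset.singleton_nonempty _)
  set K := Finset.univ.image fun i => t i + N
  have key : ∀ f ∈ F, ∃ w,
      P.lift (P.listProd (List.ofFn a)) * ∏ u ∈ K, P.of (f u) = P.of w ∧ w ∈ E := by
    intro f hf
    obtain ⟨w, hw, hwE, -⟩ := hprod _ (Finset.mem_image_of_mem _ hf)
    refine ⟨w, ?_, hwE⟩
    rw [Finset.prod_image fun i _ j _ hij => ht.injective (by omega),
      ← lift_jProd a t (fun n => f (n + N)), hw]
    rfl
  obtain ⟨g, hg⟩ := exists_eq_some_of_lift_mul_eq_of (key f₀ hf₀).choose_spec.1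
  refine ⟨g, K, ⟨_, Finset.mem_image_of_mem _ (Finset.mem_univ ⟨0, hm⟩)⟩, by simp [K], ?_⟩
  intro f hf
  obtain ⟨w, hw, hwE⟩ := key f hf
  rw [hg] at hw
  exact ⟨w, hw, hwE⟩

end JSet

section StarSet

variable {S : Type*} {P : PartialSemigroup S} {r : Ultrafilter S}

lemma invImg_eq_of_mul_eq {a t v : S} (h : P.mul a t = some v) (A : Set S) :
    P.invImg v A = P.invImg t (P.invImg a A) := by
  ext s
  have hassoc := P.assoc a t s
  rw [h, Option.bind_some] at hassoc
  constructor
  · rintro ⟨w, hw, hwA⟩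
    obtain ⟨u, hu, hu2⟩ := Option.bind_eq_some_iff.1 (hassoc.symm.trans hw)
    exact ⟨u, hu, w, hu2, hwA⟩
  · rintro ⟨u, hu, w, hw, hwA⟩
    exact ⟨w, by rw [hassoc, hu, Option.bind_some, hw], hwA⟩

variable (P) in
/-- The set `A⋆` of Hindman and Strauss. -/
def starSet (r : Ultrafilter S) (A : Set S) : Set S := {a ∈ A | P.invImg a A ∈ r}

lemma starSet_mem (hidem : ∀ A ∈ r, {a | P.invImg a A ∈ r} ∈ r) {A : Set S} (hA : A ∈ r) :
    P.starSet r A ∈ r :=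
  Filter.inter_mem hA (hidem A hA)

lemma invImg_starSet_mem (hidem : ∀ A ∈ r, {a | P.invImg a A ∈ r} ∈ r) {A : Set S} {a : S}
    (ha : a ∈ P.starSet r A) : P.invImg a (P.starSet r A) ∈ r := by
  refine Filter.mem_of_superset (Filter.inter_mem ha.2 (hidem _ ha.2)) ?_
  rintro t ⟨⟨v, hv, hvA⟩, ht⟩
  exact ⟨v, hv, hvA, by rwa [invImg_eq_of_mul_eq hv]⟩

end StarSet

section Chains

variable {S : Type*} (P : PartialSemigroup S)

/-- `P_f(ℱ)`. -/
abbrev AdequateFinset : Type _ := {G : Finset (ℕ → S) // G.Nonempty ∧ ∀ f ∈ G, P.AdequateSeq f}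

variable {P} in
lemma finite_setOf_val_subset (F : Finset (ℕ → S)) : {G : P.AdequateFinset | G.1 ⊆ F}.Finite :=
  (F.powerset.finite_toSet.preimage Subtype.val_injective.injOn).subset fun G hG => by
    simpa using hG

variable {P} in
lemma exists_bound_of_lt (Ψ : P.AdequateFinset → S × Finset ℕ) (F : P.AdequateFinset) :
    ∃ B, ∀ G < F, ∀ i ∈ (Ψ G).2, i ≤ B := by
  obtain ⟨B, hB⟩ :=
    ((finite_setOf_val_subset F.1).biUnion fun G _ => (Ψ G).2.finite_toSet).bddAbove
  exact ⟨B, fun G hG i hi => hB (Set.mem_biUnion (x := G) hG.le hi)⟩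

variable [Fact (∀ a b : S, P.mul a b = P.mul b a)]

def blockProd (p : S × Finset ℕ) (f : ℕ → S) : WithOne P.Total :=
  P.of p.1 * ∏ t ∈ p.2, P.of (f t)

def chainProd {n : ℕ} (p : Fin n → S × Finset ℕ) (f : Fin n → ℕ → S) : WithOne P.Total :=
  ∏ i, P.blockProd (p i) (f i)

/-- What `y = (γ(F), H(F))` has to satisfy, given the values `Ψ` on the families below `F`;
in a chain ending at `F`, the top block is evaluated at `y`. -/
structure IsGoodStep (C : ℕ → Set S) (Ψ : P.AdequateFinset → S × Finset ℕ)
    (F : P.AdequateFinset) (y : S × Finset ℕ) : Prop where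
  nonempty : y.2.Nonempty
  lt_of_lt : ∀ G < F, ∀ i ∈ (Ψ G).2, ∀ j ∈ y.2, i < j
  chainProd_mem : ∀ (n : ℕ) (G : Fin (n + 1) → P.AdequateFinset) (f : Fin (n + 1) → ℕ → S),
    StrictMono G → G (Fin.last n) = F → (∀ i, f i ∈ (G i).1) →
    ∃ v, P.chainProd (Ψ ∘ G ∘ Fin.castSucc) (f ∘ Fin.castSucc) * P.blockProd y (f (Fin.last n))
      = P.of v ∧ v ∈ C (G 0).1.card

def chainValues (Ψ : P.AdequateFinset → S × Finset ℕ) (F : P.AdequateFinset) : Set (S × ℕ) :=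
  {q | ∃ (n : ℕ) (G : Fin (n + 1) → P.AdequateFinset) (f : Fin (n + 1) → ℕ → S),
    StrictMono G ∧ G (Fin.last n) < F ∧ (∀ i, f i ∈ (G i).1) ∧
    P.chainProd (Ψ ∘ G) f = P.of q.1 ∧ q.2 = (G 0).1.card}

variable {P}

lemma chainProd_castSucc {n : ℕ} (p : Fin (n + 1) → S × Finset ℕ) (f : Fin (n + 1) → ℕ → S) :
    P.chainProd p f = P.chainProd (p ∘ Fin.castSucc) (f ∘ Fin.castSucc) *
      P.blockProd (p (Fin.last n)) (f (Fin.last n)) :=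
  Fin.prod_univ_castSucc _

lemma lift_bind_mul_finProd (p : S × Finset ℕ) (hp : p.2.Nonempty) (f : ℕ → S) :
    P.lift ((P.finProd f p.2).bind fun w => P.mul p.1 w) = P.blockProd p f := by
  rw [blockProd, ← lift_finProd f hp]
  rfl

lemma lift_optProd_eq_chainProd {n : ℕ} (p : Fin (n + 1) → S × Finset ℕ)
    (hp : ∀ i, (p i).2.Nonempty) (f : Fin (n + 1) → ℕ → S) :
    P.lift (P.optProd ((List.finRange (n + 1)).map
      fun i => (P.finProd (f i) (p i).2).bind fun w => P.mul (p i).1 w)) = P.chainProd p f := by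
  rw [lift_optProd (by simp), List.map_map, chainProd, Fin.prod_univ_def]
  exact congrArg _ (List.map_congr_left fun i _ => lift_bind_mul_finProd _ (hp i) _)

/-- Chains below `F` have length at most `2 ^ |F|`, and their links are subsets of `F`. -/
lemma finite_chainValues (Ψ : P.AdequateFinset → S × Finset ℕ) (F : P.AdequateFinset) :
    (P.chainValues Ψ F).Finite := by
  let T (n : ℕ) : Set ((Fin (n + 1) → P.AdequateFinset) × (Fin (n + 1) → ℕ → S)) :=
    Set.univ.pi (fun _ => {G | G.1 ⊆ F.1}) ×ˢ Set.univ.pi (fun _ => ↑F.1)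
  have hT (n : ℕ) : (T n).Finite :=
    (Set.Finite.pi fun _ => finite_setOf_val_subset _).prod
      (Set.Finite.pi fun _ => F.1.finite_toSet)
  refine ((Set.finite_lt_nat (2 ^ F.1.card)).biUnion fun n _ =>
    (hT n).image fun Gf => (P.chainProd (Ψ ∘ Gf.1) Gf.2, (Gf.1 0).1.card)).preimage
      (f := Prod.map P.of id) (of_injective.prodMap Function.injective_id).injOn |>.subset ?_
  rintro q ⟨n, G, f, hG, htop, hf, hprod, hq⟩
  have hsub (i : Fin (n + 1)) : (G i).1 ⊆ F.1 := (hG.monotone (Fin.le_last i)).trans htop.le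
  have hlen : n + 1 ≤ 2 ^ F.1.card := by
    simpa using Finset.card_le_card_of_injOn (s := Finset.univ) (t := F.1.powerset)
      (fun i => (G i).1) (fun i _ => Finset.mem_powerset.2 (hsub i))
      (fun i _ j _ h => hG.injective (Subtype.ext h))
  exact Set.mem_biUnion (x := n) (show n < 2 ^ F.1.card by omega)
    ⟨(G, f), ⟨fun i _ => hsub i, fun i _ => hsub i (hf i)⟩, Prod.ext hprod hq.symm⟩

variable {C : ℕ → Set S} {Ψ : P.AdequateFinset → S × Finset ℕ} {F : P.AdequateFinset}

lemma IsGoodStep.congr {Ψ' : P.AdequateFinset → S × Finset ℕ} {y : S × Finset ℕ}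
    (h : ∀ G < F, Ψ G = Ψ' G) (hy : P.IsGoodStep C Ψ F y) : P.IsGoodStep C Ψ' F y where
  nonempty := hy.nonempty
  lt_of_lt G hG := h G hG ▸ hy.lt_of_lt G hG
  chainProd_mem n G f hG htop hf := by
    have hΨ : Ψ ∘ G ∘ Fin.castSucc = Ψ' ∘ G ∘ Fin.castSucc :=
      funext fun i => h _ (htop ▸ hG (Fin.castSucc_lt_last i))
    exact hΨ ▸ hy.chainProd_mem n G f hG htop hf

lemma exists_chainProd_eq_of_lt (hΨ : ∀ G < F, P.IsGoodStep C Ψ G (Ψ G)) {n : ℕ}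
    {G : Fin (n + 1) → P.AdequateFinset} (hG : StrictMono G) (htop : G (Fin.last n) < F)
    {f : Fin (n + 1) → ℕ → S} (hf : ∀ i, f i ∈ (G i).1) :
    ∃ v, P.chainProd (Ψ ∘ G) f = P.of v ∧ v ∈ C (G 0).1.card := by
  rw [chainProd_castSucc]
  exact (hΨ _ htop).chainProd_mem n G f hG rfl hf

lemma exists_isGoodStep {r : Ultrafilter S} (hrJ : ∀ A ∈ r, P.IsJSet A) (hC : ∀ n, C n ∈ r)
    (hCinv : ∀ n, ∀ v ∈ C n, P.invImg v (C n) ∈ r) (hΨ : ∀ G < F, P.IsGoodStep C Ψ G (Ψ G)) :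
    ∃ y, P.IsGoodStep C Ψ F y := by
  have hvals : ∀ q ∈ P.chainValues Ψ F, q.1 ∈ C q.2 := by
    rintro ⟨x, k⟩ ⟨n, G, f, hG, htop, hf, hprod, rfl : k = _⟩
    obtain ⟨v, hv, hvC⟩ := exists_chainProd_eq_of_lt hΨ hG htop hf
    rwa [of_injective (hprod.symm.trans hv)]
  let D := C F.1.card ∩ ⋂ q ∈ P.chainValues Ψ F, P.invImg q.1 (C q.2)
  have hD : D ∈ r := Filter.inter_mem (hC _)
    ((Filter.biInter_mem (finite_chainValues Ψ F)).2 fun q hq => hCinv _ _ (hvals q hq))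
  obtain ⟨B, hB⟩ := exists_bound_of_lt Ψ F
  obtain ⟨g, K, hK, hKB, hKD⟩ := (hrJ D hD).exists_mul_prod_mem F.2.1 F.2.2 (B + 1)
  refine ⟨(g, K), hK, fun G hG i hi j hj => (hB G hG i hi).trans_lt (hKB j hj), ?_⟩
  intro n G f hG htop hf
  obtain ⟨w, hw, hwC, hwD⟩ := hKD (f (Fin.last n)) (htop ▸ hf _)
  cases n with
  | zero =>
    refine ⟨w, (one_mul _).trans hw, ?_⟩
    rwa [show (0 : Fin 1) = Fin.last 0 from rfl, htop]
  | succ m =>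
    have hG' : StrictMono (G ∘ Fin.castSucc) := hG.comp Fin.strictMono_castSucc
    have htop' : G (Fin.last m).castSucc < F := htop ▸ hG (Fin.castSucc_lt_last _)
    obtain ⟨v, hv, -⟩ :=
      exists_chainProd_eq_of_lt hΨ hG' htop' (f := f ∘ Fin.castSucc) fun i => hf _
    obtain ⟨u, hu, huC⟩ : w ∈ P.invImg v (C (G 0).1.card) :=
      Set.mem_iInter₂.1 hwD (v, _) ⟨m, _, _, hG', htop', fun i => hf _, hv, rfl⟩
    exact ⟨u, by rw [hv, blockProd, hw, of_mul_of, hu]; rfl, huC⟩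

end Chains

end PartialSemigroup

open PartialSemigroup in
theorem stmt13_general {S : Type*} (P : PartialSemigroup S)
    (hcomm : ∀ a b : S, P.mul a b = P.mul b a)
    -- `r` is an idempotent in `J(S) ⊆ δS`:
    (r : Ultrafilter S)
    (hrJ : ∀ A : Set S, A ∈ r → P.IsJSet A)
    (hidem : ∀ A : Set S, A ∈ r ↔ {a : S | P.invImg a A ∈ r} ∈ r)
    (C : ℕ → Set S) (hC : ∀ n, C n ∈ r) :
    ∃ γ : {G : Finset (ℕ → S) // G.Nonempty ∧ ∀ f ∈ G, P.AdequateSeq f} → S,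
    ∃ H : {G : Finset (ℕ → S) // G.Nonempty ∧ ∀ f ∈ G, P.AdequateSeq f} → Finset ℕ,
      (∀ G, (H G).Nonempty) ∧
      -- (1): if G ⊊ F then max H(G) < min H(F)
      (∀ F G, G.1 ⊂ F.1 → ∀ i ∈ H G, ∀ j ∈ H F, i < j) ∧
      -- (2): products along increasing chains with |G₁| = m land in C m
      (∀ (n : ℕ) (G : Fin (n + 1) → {G : Finset (ℕ → S) // G.Nonempty ∧
            ∀ f ∈ G, P.AdequateSeq f})
          (f : Fin (n + 1) → ℕ → S),
        (∀ i j : Fin (n + 1), i < j → (G i).1 ⊂ (G j).1) →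
        (∀ i, f i ∈ (G i).1) →
        ∃ v, P.optProd ((List.finRange (n + 1)).map
              (fun i => (P.finProd (f i) (H (G i))).bind
                (fun w => P.mul (γ (G i)) w))) = some v ∧
          v ∈ C ((G 0).1.card)) := by
  have : Fact (∀ a b : S, P.mul a b = P.mul b a) := ⟨hcomm⟩
  have : Nonempty S := Filter.nonempty_of_neBot (r : Filter S)
  have hidem' : ∀ A ∈ r, {a | P.invImg a A ∈ r} ∈ r := fun A => (hidem A).1
  obtain ⟨Ψ, hΨ⟩ := WellFoundedLT.exists_forall_spec (P.IsGoodStep fun m => P.starSet r (C m))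
    (fun _ _ _ _ => IsGoodStep.congr) fun _ _ => exists_isGoodStep hrJ
      (fun n => starSet_mem hidem' (hC n)) fun _ _ => invImg_starSet_mem hidem'
  refine ⟨fun G => (Ψ G).1, fun G => (Ψ G).2, fun G => (hΨ G).nonempty,
    fun F G => (hΨ F).lt_of_lt G, fun n G f hG hf => ?_⟩
  obtain ⟨v, hv, hvC⟩ := (hΨ (G (Fin.last n))).chainProd_mem n G f (fun i j => hG i j) rfl hf
  refine ⟨v, lift_injective (P := P) ?_, hvC.1⟩
  exact (lift_optProd_eq_chainProd (Ψ ∘ G) (fun i => (hΨ _).nonempty) f).trans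
    ((chainProd_castSucc _ _).trans hv)

open PartialSemigroup in
/-- Phulara-type central sets theorem for commutative adequate partial semigroups. -/
theorem stmt13 {S : Type*} (P : PartialSemigroup S) (hP : P.Adequate)
    (hcomm : ∀ a b : S, P.mul a b = P.mul b a)
    -- `r` is an idempotent in `J(S) ⊆ δS`:
    (r : Ultrafilter S) (hrδ : P.mem_delta r)
    (hrJ : ∀ A : Set S, A ∈ r → P.IsJSet A)
    (hidem : ∀ A : Set S, A ∈ r ↔ {a : S | P.invImg a A ∈ r} ∈ r)
    (C : ℕ → Set S) (hC : ∀ n, C n ∈ r) :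
    ∃ γ : {G : Finset (ℕ → S) // G.Nonempty ∧ ∀ f ∈ G, P.AdequateSeq f} → S,
    ∃ H : {G : Finset (ℕ → S) // G.Nonempty ∧ ∀ f ∈ G, P.AdequateSeq f} → Finset ℕ,
      (∀ G, (H G).Nonempty) ∧
      -- (1): if G ⊊ F then max H(G) < min H(F)
      (∀ F G, G.1 ⊂ F.1 → ∀ i ∈ H G, ∀ j ∈ H F, i < j) ∧
      -- (2): products along increasing chains with |G₁| = m land in C m
      (∀ (n : ℕ) (G : Fin (n + 1) → {G : Finset (ℕ → S) // G.Nonempty ∧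
            ∀ f ∈ G, P.AdequateSeq f})
          (f : Fin (n + 1) → ℕ → S),
        (∀ i j : Fin (n + 1), i < j → (G i).1 ⊂ (G j).1) →
        (∀ i, f i ∈ (G i).1) →
        ∃ v, P.optProd ((List.finRange (n + 1)).map
              (fun i => (P.finProd (f i) (H (G i))).bind
                (fun w => P.mul (γ (G i)) w))) = some v ∧
          v ∈ C ((G 0).1.card)) :=
  stmt13_general P hcomm r hrJ hidem C hC
end

section
/- Let (S,+) be a commutative cancellative semigroup with group of quotients G. Then S is piecewise syndetic in G, K(βS) = cl(S) ∩ K(βG), and every subset of S that is central in S is central in G. -/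
/-!
Write `T = cl S` for the copy of `βS` inside `βG`. Since `G = S - S`, the translates `-g + S`
are downward directed, so some ultrafilter `ℓ` contains all of them; then `S ∈ r + ℓ` for every
`r`, and taking `r ∈ K(βG)` shows that `T` meets `K(βG)`. Hence `T ∩ K(βG)` is an ideal of `T`
and contains `K(βS)`.

Conversely, every `z ∈ K(βG)` lies in a minimal closed left ideal `L = βG + e`, so `z + e = z`
for every idempotent `e ∈ L`. For `y ∈ K(βS)` and `z ∈ T ∩ K(βG)`, the compact semigroup
`T + (y + z)` lies in `K(βS) ∩ L` and contains an idempotent `e`, whence `z = z + e ∈ K(βS)`.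
-/

/-- `K` is the smallest (two-sided) ideal of the subsemigroup `T` of `βG`
with respect to the operation `addOp`. -/
def IsSmallestIdealOn {G : Type*} (addOp : Ultrafilter G → Ultrafilter G → Ultrafilter G)
    (T K : Set (Ultrafilter G)) : Prop :=
  K ⊆ T ∧ K.Nonempty ∧ (∀ p ∈ K, ∀ q ∈ T, addOp p q ∈ K ∧ addOp q p ∈ K) ∧
  ∀ K' : Set (Ultrafilter G),
    (K' ⊆ T ∧ K'.Nonempty ∧ ∀ p ∈ K', ∀ q ∈ T, addOp p q ∈ K' ∧ addOp q p ∈ K') →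
    K ⊆ K'

open Set Filter

attribute [local instance] Ultrafilter.add Ultrafilter.addSemigroup

section LeftIdeal

variable {M : Type*} [AddSemigroup M] [TopologicalSpace M]

structure IsClosedAddLeftIdeal (L : Set M) : Prop where
  isClosed : IsClosed L
  nonempty : L.Nonempty
  add_mem : ∀ q, ∀ p ∈ L, q + p ∈ L

theorem isClosedAddLeftIdeal_range_add_right [CompactSpace M] [T2Space M]
    (hρ : ∀ r : M, Continuous (· + r)) (p : M) : IsClosedAddLeftIdeal (range (· + p)) where
  isClosed := (isCompact_range (hρ p)).isClosed
  nonempty := ⟨p + p, p, rfl⟩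
  add_mem q := by
    rintro _ ⟨a, rfl⟩
    exact ⟨q + a, add_assoc q a p⟩

theorem IsClosedAddLeftIdeal.exists_minimal_subset [CompactSpace M] {L : Set M}
    (hL : IsClosedAddLeftIdeal L) : ∃ L' ⊆ L, Minimal IsClosedAddLeftIdeal L' := by
  refine zorn_superset_nonempty {I | IsClosedAddLeftIdeal I} (fun c hc hchain hne => ?_) L hL
  have : Nonempty c := hne.to_subtype
  refine ⟨⋂₀ c, ⟨isClosed_sInter fun s hs => (hc hs).isClosed, ?_, ?_⟩,
    fun s hs => sInter_subset_of_mem hs⟩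
  · exact IsCompact.nonempty_sInter_of_directed_nonempty_isCompact_isClosed
      (IsChain.directedOn (r := fun s t : Set M => s ⊇ t) hchain.symm)
      (fun s hs => (hc hs).nonempty) (fun s hs => (hc hs).isClosed.isCompact)
      (fun s hs => (hc hs).isClosed)
  · exact fun q p hp => mem_sInter.2 fun s hs => (hc hs).add_mem q p (hp s hs)

variable [CompactSpace M] [T2Space M] {L : Set M}

theorem Minimal.range_add_right_eq (hρ : ∀ r : M, Continuous (· + r))
    (hL : Minimal IsClosedAddLeftIdeal L) {p : M} (hp : p ∈ L) : range (· + p) = L :=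
  hL.eq_of_subset (isClosedAddLeftIdeal_range_add_right hρ p) <| by
    rintro _ ⟨a, rfl⟩
    exact hL.prop.add_mem a p hp

theorem Minimal.add_eq_self_of_idempotent (hρ : ∀ r : M, Continuous (· + r))
    (hL : Minimal IsClosedAddLeftIdeal L) {z e : M} (hz : z ∈ L) (he : e ∈ L) (hee : e + e = e) :
    z + e = z := by
  obtain ⟨a, rfl⟩ : z ∈ range (· + e) := (hL.range_add_right_eq hρ he).symm ▸ hz
  simp only [add_assoc, hee]

theorem Minimal.image_add_right (hρ : ∀ r : M, Continuous (· + r))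
    (hL : Minimal IsClosedAddLeftIdeal L) (q : M) :
    Minimal IsClosedAddLeftIdeal ((· + q) '' L) := by
  have hrange : ∀ l ∈ L, (· + q) '' L = range (· + (l + q)) := by
    intro l hl
    rw [← hL.range_add_right_eq hρ hl, ← range_comp]
    simp only [Function.comp_def, add_assoc]
  obtain ⟨l, hl⟩ := hL.prop.nonempty
  refine ⟨hrange l hl ▸ isClosedAddLeftIdeal_range_add_right hρ _, fun J hJ hJsub => ?_⟩
  obtain ⟨_, hp⟩ := hJ.nonempty
  obtain ⟨l', hl', rfl⟩ := hJsub hp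
  rw [hrange l' hl']
  rintro _ ⟨a, rfl⟩
  exact hJ.add_mem a _ hp

end LeftIdeal

namespace IsSmallestIdealOn

variable {G : Type*} [AddSemigroup G] {T KT KG : Set (Ultrafilter G)}

theorem subset_minimal_isClosedAddLeftIdeal (hKG : IsSmallestIdealOn (· + ·) univ KG) :
    KG ⊆ {p | ∃ L, Minimal IsClosedAddLeftIdeal L ∧ p ∈ L} := by
  refine hKG.2.2.2 _ ⟨subset_univ _, ?_, ?_⟩
  · obtain ⟨r, -⟩ := hKG.2.1
    obtain ⟨L, -, hL⟩ := IsClosedAddLeftIdeal.exists_minimal_subset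
      ⟨isClosed_univ, ⟨r, trivial⟩, fun _ _ _ => trivial⟩
    obtain ⟨p, hp⟩ := hL.prop.nonempty
    exact ⟨p, L, hL, hp⟩
  · rintro p ⟨L, hL, hp⟩ q -
    exact ⟨⟨_, hL.image_add_right Ultrafilter.continuous_add_left q, mem_image_of_mem _ hp⟩,
      ⟨L, hL, hL.prop.add_mem q p hp⟩⟩

theorem subset_inter (hKT : IsSmallestIdealOn (· + ·) T KT)
    (hKG : IsSmallestIdealOn (· + ·) univ KG) (hTadd : ∀ p ∈ T, ∀ q ∈ T, p + q ∈ T)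
    (hmeet : (T ∩ KG).Nonempty) : KT ⊆ T ∩ KG :=
  hKT.2.2.2 _ ⟨inter_subset_left, hmeet, fun p ⟨hpT, hpK⟩ q hq =>
    ⟨⟨hTadd p hpT q hq, (hKG.2.2.1 p hpK q trivial).1⟩,
      ⟨hTadd q hq p hpT, (hKG.2.2.1 p hpK q trivial).2⟩⟩⟩

theorem inter_subset (hKT : IsSmallestIdealOn (· + ·) T KT)
    (hKG : IsSmallestIdealOn (· + ·) univ KG) (hTc : IsClosed T)
    (hTadd : ∀ p ∈ T, ∀ q ∈ T, p + q ∈ T) : T ∩ KG ⊆ KT := by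
  rintro z ⟨hzT, hzK⟩
  obtain ⟨L, hL, hzL⟩ := hKG.subset_minimal_isClosedAddLeftIdeal hzK
  obtain ⟨y, hy⟩ := hKT.2.1
  have hwK : y + z ∈ KT := (hKT.2.2.1 y hy z hzT).1
  have hwT : y + z ∈ T := hKT.1 hwK
  obtain ⟨_, ⟨t, ht, rfl⟩, hidem⟩ :=
    exists_idempotent_in_compact_add_subsemigroup Ultrafilter.continuous_add_left
      ((· + (y + z)) '' T) ⟨_, _, hwT, rfl⟩
      (hTc.isCompact.image (Ultrafilter.continuous_add_left _)) (by
        rintro _ ⟨a, ha, rfl⟩ _ ⟨b, hb, rfl⟩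
        exact ⟨a + (y + z) + b, hTadd _ (hTadd a ha _ hwT) b hb, by simp only [add_assoc]⟩)
  have heK : t + (y + z) ∈ KT := (hKT.2.2.1 _ hwK t ht).2
  have heL : t + (y + z) ∈ L := hL.prop.add_mem t _ (hL.prop.add_mem y z hzL)
  have hze := hL.add_eq_self_of_idempotent Ultrafilter.continuous_add_left hzL heL hidem
  exact hze ▸ (hKT.2.2.1 _ heK z hzT).2

theorem eq_inter (hKT : IsSmallestIdealOn (· + ·) T KT)
    (hKG : IsSmallestIdealOn (· + ·) univ KG) (hTc : IsClosed T)
    (hTadd : ∀ p ∈ T, ∀ q ∈ T, p + q ∈ T) (hmeet : (T ∩ KG).Nonempty) : KT = T ∩ KG :=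
  (hKT.subset_inter hKG hTadd hmeet).antisymm (hKT.inter_subset hKG hTc hTadd)

end IsSmallestIdealOn

theorem Ultrafilter.mem_add_iff {G : Type*} [Add G] {p q : Ultrafilter G} {A : Set G} :
    A ∈ p + q ↔ {a | {b | a + b ∈ A} ∈ q} ∈ p :=
  Iff.rfl

theorem exists_ultrafilter_forall_preimage_add_left_mem {G : Type*} [AddCommGroup G] {S : Set G}
    (hclosed : ∀ a ∈ S, ∀ b ∈ S, a + b ∈ S) (hquot : ∀ g : G, ∃ a ∈ S, ∃ b ∈ S, g = a - b) :
    ∃ p : Ultrafilter G, ∀ g, (g + ·) ⁻¹' S ∈ p := by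
  have hdir : Directed (· ≥ ·) fun g => 𝓟 ((g + ·) ⁻¹' S) := by
    intro g g'
    obtain ⟨a, ha, b, hb, rfl⟩ := hquot g
    obtain ⟨a', ha', b', hb', rfl⟩ := hquot g'
    refine ⟨-(b + b'), principal_mono.2 fun x hx => ?_, principal_mono.2 fun x hx => ?_⟩
    · show a - b + x ∈ S
      rw [show a - b + x = a + b' + (-(b + b') + x) by abel]
      exact hclosed _ (hclosed a ha b' hb') _ hx
    · show a' - b' + x ∈ S
      rw [show a' - b' + x = a' + b + (-(b + b') + x) by abel]
      exact hclosed _ (hclosed a' ha' b hb) _ hx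
  have hne : ∀ g, (𝓟 ((g + ·) ⁻¹' S)).NeBot := by
    intro g
    obtain ⟨a, ha, b, hb, rfl⟩ := hquot g
    exact principal_neBot_iff.2 ⟨b, show a - b + b ∈ S by rwa [sub_add_cancel]⟩
  have := iInf_neBot_of_directed' hdir hne
  exact ⟨Ultrafilter.of _, fun g => Ultrafilter.of_le _ (mem_iInf_of_mem g (mem_principal_self _))⟩

theorem Ultrafilter.mem_add_of_forall_preimage_add_left_mem {G : Type*} [Add G] {S : Set G}
    {p : Ultrafilter G} (hp : ∀ g, (g + ·) ⁻¹' S ∈ p) (q : Ultrafilter G) : S ∈ q + p :=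
  Ultrafilter.mem_add_iff.2 (Filter.univ_mem' hp)

theorem stmt19_general {G : Type*} [AddCommGroup G] (S : Set G)
    (hclosed : ∀ a ∈ S, ∀ b ∈ S, a + b ∈ S)
    (hquot : ∀ g : G, ∃ a ∈ S, ∃ b ∈ S, g = a - b)
    (addOp : Ultrafilter G → Ultrafilter G → Ultrafilter G)
    (haddOp : ∀ (p q : Ultrafilter G) (A : Set G),
      A ∈ addOp p q ↔ {a : G | {b : G | a + b ∈ A} ∈ q} ∈ p)
    (KS KG : Set (Ultrafilter G))
    (hKS : IsSmallestIdealOn addOp {p : Ultrafilter G | S ∈ p} KS)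
    (hKG : IsSmallestIdealOn addOp Set.univ KG) :
    (∃ p ∈ KG, S ∈ p) ∧
    KS = {p : Ultrafilter G | S ∈ p} ∩ KG ∧
    (∀ A : Set G, A ⊆ S → (∃ p ∈ KS, addOp p p = p ∧ A ∈ p) →
      ∃ p ∈ KG, addOp p p = p ∧ A ∈ p) := by
  obtain rfl : addOp = (· + ·) :=
    funext₂ fun p q => Ultrafilter.ext fun A => (haddOp p q A).trans Ultrafilter.mem_add_iff.symm
  have hTadd : ∀ p ∈ {p : Ultrafilter G | S ∈ p}, ∀ q ∈ {p : Ultrafilter G | S ∈ p},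
      p + q ∈ {p : Ultrafilter G | S ∈ p} := fun p hp q hq =>
    mem_of_superset hp fun a ha => mem_of_superset hq fun b hb => hclosed a ha b hb
  obtain ⟨ℓ, hℓ⟩ := exists_ultrafilter_forall_preimage_add_left_mem hclosed hquot
  obtain ⟨r, hr⟩ := hKG.2.1
  have hsynd : ∃ p ∈ KG, S ∈ p :=
    ⟨r + ℓ, (hKG.2.2.1 r hr ℓ trivial).1, Ultrafilter.mem_add_of_forall_preimage_add_left_mem hℓ r⟩
  have hK := hKS.eq_inter hKG (ultrafilter_isClosed_basic S) hTadd
    (hsynd.imp fun _ ⟨hpK, hpS⟩ => ⟨hpS, hpK⟩)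
  refine ⟨hsynd, hK, ?_⟩
  rintro A - ⟨p, hp, hpp, hA⟩
  exact ⟨p, (hK.subset hp).2, hpp, hA⟩

/-- Let `S` be a commutative cancellative semigroup with group of quotients `G`
(realized as a nonempty additively closed subset `S` of the abelian group `G`
with `G = {a - b : a, b ∈ S}`).  Identifying `βS` with `cl(S) = {p : S ∈ p}` in
`βG`: `S` is piecewise syndetic in `G`, `K(βS) = cl(S) ∩ K(βG)`, and every
subset of `S` central in `S` is central in `G`. -/
theorem stmt19 {G : Type*} [AddCommGroup G] (S : Set G) (hne : S.Nonempty)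
    (hclosed : ∀ a ∈ S, ∀ b ∈ S, a + b ∈ S)
    (hquot : ∀ g : G, ∃ a ∈ S, ∃ b ∈ S, g = a - b)
    (addOp : Ultrafilter G → Ultrafilter G → Ultrafilter G)
    (haddOp : ∀ (p q : Ultrafilter G) (A : Set G),
      A ∈ addOp p q ↔ {a : G | {b : G | a + b ∈ A} ∈ q} ∈ p)
    (KS KG : Set (Ultrafilter G))
    (hKS : IsSmallestIdealOn addOp {p : Ultrafilter G | S ∈ p} KS)
    (hKG : IsSmallestIdealOn addOp Set.univ KG) :
    (∃ p ∈ KG, S ∈ p) ∧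
    KS = {p : Ultrafilter G | S ∈ p} ∩ KG ∧
    (∀ A : Set G, A ⊆ S → (∃ p ∈ KS, addOp p p = p ∧ A ∈ p) →
      ∃ p ∈ KG, addOp p p = p ∧ A ∈ p) :=
  stmt19_general S hclosed hquot addOp haddOp KS KG hKS hKG
end
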